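/- arXiv:2404.18711 — 2 statements merged into one kernel-verified Lean document; each statement's English description precedes it below -/
import Mathlib

section
/- The restricted Beurling–Malliavin density is at most the upper Pólya density: b_{(1,+∞]}(Λ) ≤ p̄(Λ). -/
open Filter Topology

/-- The counting function of the sequence `Λ`: `F_Λ(t) = #{k : Λ k ≤ t}` for `t > 0`
and `0` otherwise. -/
noncomputable def countFn (Λ : ℕ → ℝ) (t : ℝ) : ℝ :=
  if 0 < t then (Nat.card {k : ℕ | Λ k ≤ t} : ℝ) else 0

/-- A sequence of intervals `((a n, b n])_n` with `0 < a n < b n ≤ a (n+1)` is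
*substantial* if `Σ (b n / a n - 1)² = ∞`. -/
def IsSubstantial (a b : ℕ → ℝ) : Prop :=
  (∀ n, 0 < a n ∧ a n < b n ∧ b n ≤ a (n + 1)) ∧
    ¬ Summable (fun n => (b n / a n - 1) ^ 2)

/-- `limsup_n b n / a n`, taken in the extended reals. -/
noncomputable def ratioLimsup (a b : ℕ → ℝ) : EReal :=
  Filter.limsup (fun n => ((b n / a n : ℝ) : EReal)) Filter.atTop

/-- `ℓ_I = liminf_n (F_Λ(b n) - F_Λ(a n)) / (b n - a n)`, in the extended reals. -/
noncomputable def ellOf (Λ : ℕ → ℝ) (a b : ℕ → ℝ) : EReal :=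
  Filter.liminf
    (fun n => (((countFn Λ (b n) - countFn Λ (a n)) / (b n - a n) : ℝ) : EReal))
    Filter.atTop

/-- The set `𝔯_A` of admissible rates `R ≥ 0`. -/
def RSet (Λ : ℕ → ℝ) (A : Set EReal) : Set ℝ :=
  {R | 0 ≤ R ∧ ∃ a b : ℕ → ℝ, IsSubstantial a b ∧ ratioLimsup a b ∈ A ∧
    ∀ᶠ n in Filter.atTop, R ≤ (countFn Λ (b n) - countFn Λ (a n)) / (b n - a n)}

/-- The (restricted) Beurling–Malliavin density `b_A(Λ) = sup 𝔯_A`. -/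
noncomputable def bmDensity (Λ : ℕ → ℝ) (A : Set EReal) : EReal :=
  sSup ((fun r : ℝ => (r : EReal)) '' RSet Λ A)

/-- `limsup_{x → ∞} (F_Λ(x) - F_Λ(ξ x)) / (x - ξ x)`, in the extended reals. -/
noncomputable def polyaLimsup (Λ : ℕ → ℝ) (ξ : ℝ) : EReal :=
  Filter.limsup
    (fun x : ℝ => (((countFn Λ x - countFn Λ (ξ * x)) / (x - ξ * x) : ℝ) : EReal))
    Filter.atTop

lemma countFn_mono (Λ : ℕ → ℝ) (htend : Filter.Tendsto Λ Filter.atTop Filter.atTop) :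
    Monotone (countFn Λ) := by
  intro s t hst
  unfold countFn
  rcases le_or_gt s 0 with hs | hs
  · rw [if_neg (not_lt.2 hs)]
    split
    · positivity
    · exact le_refl 0
  · rw [if_pos hs, if_pos (hs.trans_le hst)]
    obtain ⟨N, hN⟩ := (htend.eventually (eventually_gt_atTop t)).exists_forall_of_atTop
    have hfin : {k : ℕ | Λ k ≤ t}.Finite := by
      apply Set.Finite.subset (Set.finite_Iio N)
      intro k hk
      by_contra hk'
      exact absurd (hN k (not_lt.1 hk')) (not_lt.2 hk)
    exact_mod_cast Nat.card_mono hfin (fun k hk => le_trans hk hst)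

lemma telescope (F : ℝ → ℝ) (ξ z b X : ℝ)
    (hz : ∀ x, X ≤ x → F x - F (ξ * x) ≤ z * (x - ξ * x)) :
    ∀ m : ℕ, (∀ k < m, X ≤ ξ ^ k * b) → F b - F (ξ ^ m * b) ≤ z * (b - ξ ^ m * b) := by
  intro m
  induction m with
  | zero => intro _; simp
  | succ m ih =>
    intro h
    have h1 : F b - F (ξ ^ m * b) ≤ z * (b - ξ ^ m * b) :=
      ih fun k hk => h k (hk.trans (Nat.lt_succ_self m))
    have h2 := hz (ξ ^ m * b) (h m (Nat.lt_succ_self m))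
    have e : ξ * (ξ ^ m * b) = ξ ^ (m + 1) * b := by ring
    rw [e] at h2
    linarith

lemma key (F : ℝ → ℝ) (hF : Monotone F) (c ξ z X a b R : ℝ)
    (hξ0 : 0 < ξ) (hξ1 : ξ < 1) (hc : 1 < c) (hz0 : 0 < z) (hX : 0 < X)
    (hz : ∀ x, X ≤ x → F x - F (ξ * x) ≤ z * (x - ξ * x))
    (haX : X ≤ a) (hab : c * a ≤ b) (hRa : R * (b - a) ≤ F b - F a) :
    R ≤ z * ((c - ξ) / (c - 1)) := by
  have ha0 : 0 < a := hX.trans_le haX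
  have hba : a < b := by nlinarith
  have hb0 : 0 < b := ha0.trans hba
  have hex : ∃ m : ℕ, ξ ^ m * b ≤ a := by
    obtain ⟨m, hm⟩ := exists_pow_lt_of_lt_one (div_pos ha0 hb0) hξ1
    exact ⟨m, ((lt_div_iff₀ hb0).1 hm).le⟩
  classical
  set m := Nat.find hex with hmdef
  have hmle : ξ ^ m * b ≤ a := Nat.find_spec hex
  have hmne : m ≠ 0 := by
    intro h
    rw [h] at hmle; simp at hmle; linarith
  have hlt : ∀ k < m, a < ξ ^ k * b := fun k hk => lt_of_not_ge (Nat.find_min hex hk)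
  have htel := telescope F ξ z b X hz m (fun k hk => haX.trans (hlt k hk).le)
  have hm1 : a < ξ ^ (m - 1) * b := hlt (m - 1) (Nat.sub_lt (Nat.pos_of_ne_zero hmne) one_pos)
  have hxa : ξ * a ≤ ξ ^ m * b := by
    have : ξ ^ m = ξ ^ (m - 1) * ξ := by
      rw [← pow_succ, Nat.sub_add_cancel (Nat.one_le_iff_ne_zero.2 hmne)]
    rw [this]
    nlinarith
  have h1 : F b - F a ≤ z * (b - ξ * a) := by
    have := hF hmle
    nlinarith
  have h2 : R * (b - a) ≤ z * (b - ξ * a) := by linarith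
  rw [mul_div_assoc'] at *
  rw [le_div_iff₀ (by linarith : (0:ℝ) < c - 1)]
  nlinarith [mul_pos hz0 (sub_pos.2 hξ1), sub_pos.2 hξ1]

theorem stmt_10 (Λ : ℕ → ℝ) (hmono : StrictMono Λ) (h0 : 0 ≤ Λ 0)
    (htend : Filter.Tendsto Λ Filter.atTop Filter.atTop) (p : EReal)
    (hp : Filter.Tendsto (fun ξ : ℝ => polyaLimsup Λ ξ)
      (nhdsWithin (1 : ℝ) (Set.Ioo (0 : ℝ) 1)) (nhds p)) :
    bmDensity Λ (Set.Ioi (1 : EReal)) ≤ p := by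
  have hF := countFn_mono Λ htend
  refine sSup_le ?_
  rintro x ⟨R, ⟨hR0, a, b, ⟨hab, hsub⟩, hratio, hev⟩, rfl⟩
  -- choose a real c with 1 < c < limsup b/a
  obtain ⟨c, hc1, hc2⟩ := EReal.exists_between_coe_real (show (1 : EReal) < ratioLimsup a b from hratio)
  have hc1' : (1 : ℝ) < c := by exact_mod_cast hc1
  have hfreq0 : ∃ᶠ n in atTop, (c : EReal) < ((b n / a n : ℝ) : EReal) :=
    Filter.frequently_lt_of_lt_limsup (by isBoundedDefault) hc2
  have hfreq : ∃ᶠ n in atTop, c * a n ≤ b n := by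
    refine hfreq0.mono (fun n hn => ?_)
    have h1 : c < b n / a n := by exact_mod_cast hn
    have ha := (hab n).1
    rw [lt_div_iff₀ ha] at h1
    linarith
  -- a n is monotone and eventually exceeds any bound
  have hamono : Monotone a := monotone_nat_of_le_succ
    (fun n => ((hab n).2.1.trans_le (hab n).2.2).le)
  have haX : ∀ X : ℝ, ∀ᶠ n in atTop, X ≤ a n := by
    intro X
    obtain ⟨φ, hφ, hφP⟩ := Filter.extraction_of_frequently_atTop hfreq
    have ha0 : 0 < a (φ 0) := (hab (φ 0)).1
    have hgrow : ∀ j, c ^ j * a (φ 0) ≤ a (φ j) := by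
      intro j
      induction j with
      | zero => simp
      | succ j ih =>
        have h1 : a (φ j + 1) ≤ a (φ (j + 1)) := hamono (hφ (Nat.lt_succ_self j))
        have h2 : b (φ j) ≤ a (φ j + 1) := (hab (φ j)).2.2
        have h3 := hφP j
        have hcp : (0:ℝ) < c ^ j := by positivity
        calc c ^ (j + 1) * a (φ 0) = c * (c ^ j * a (φ 0)) := by ring
          _ ≤ c * a (φ j) := by nlinarith
          _ ≤ b (φ j) := h3
          _ ≤ a (φ j + 1) := h2
          _ ≤ a (φ (j + 1)) := h1
    obtain ⟨j, hj⟩ := pow_unbounded_of_one_lt (X / a (φ 0)) hc1'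
    have hXj : X ≤ a (φ j) := by
      have := (div_lt_iff₀ ha0).1 hj
      nlinarith [hgrow j]
    exact eventually_atTop.2 ⟨φ j, fun n hn => hXj.trans (hamono hn)⟩
  -- per-ξ bound
  have hmain : ∀ ξ ∈ Set.Ioo (0:ℝ) 1,
      ((R * ((c - 1) / (c - ξ)) : ℝ) : EReal) ≤ polyaLimsup Λ ξ := by
    rintro ξ ⟨hξ0, hξ1⟩
    have hcξ : (0:ℝ) < c - ξ := by linarith
    have hnonneg : (0 : EReal) ≤ polyaLimsup Λ ξ := by
      apply Filter.le_limsup_of_frequently_le _ (by isBoundedDefault)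
      apply Filter.Eventually.frequently
      filter_upwards [eventually_ge_atTop (1:ℝ)] with y hy
      have hy0 : (0:ℝ) < y := by linarith
      have h1 : (0:ℝ) ≤ (countFn Λ y - countFn Λ (ξ * y)) / (y - ξ * y) := by
        apply div_nonneg
        · have := hF (show ξ * y ≤ y from by nlinarith)
          linarith
        · nlinarith
      exact_mod_cast h1
    by_contra hcon
    push_neg at hcon
    obtain ⟨z, hz1, hz2⟩ := EReal.exists_between_coe_real hcon
    have hz2' : z < R * ((c - 1) / (c - ξ)) := by exact_mod_cast hz2
    have hz0 : (0:ℝ) < z := by exact_mod_cast hnonneg.trans_lt hz1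
    have hev2 : ∀ᶠ y in atTop,
        (((countFn Λ y - countFn Λ (ξ * y)) / (y - ξ * y) : ℝ) : EReal) < (z : EReal) :=
      Filter.eventually_lt_of_limsup_lt hz1 (by isBoundedDefault)
    obtain ⟨X0, hX0⟩ := eventually_atTop.1 hev2
    set X := max X0 1 with hXdef
    have hXpos : (0:ℝ) < X := lt_of_lt_of_le one_pos (le_max_right _ _)
    have hzb : ∀ y, X ≤ y → countFn Λ y - countFn Λ (ξ * y) ≤ z * (y - ξ * y) := by
      intro y hy
      have hy1 : (1:ℝ) ≤ y := le_trans (le_max_right _ _) hy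
      have hden : (0:ℝ) < y - ξ * y := by nlinarith
      have := hX0 y (le_trans (le_max_left _ _) hy)
      have h1 : (countFn Λ y - countFn Λ (ξ * y)) / (y - ξ * y) < z := by exact_mod_cast this
      rw [div_lt_iff₀ hden] at h1
      linarith
    obtain ⟨n, hn1, hn2, hn3⟩ := (hfreq.and_eventually ((haX X).and hev)).exists
    have hba : a n < b n := (hab n).2.1
    have hRa : R * (b n - a n) ≤ countFn Λ (b n) - countFn Λ (a n) := by
      rw [le_div_iff₀ (by linarith : (0:ℝ) < b n - a n)] at hn3
      linarith
    have hkey := key (countFn Λ) hF c ξ z X (a n) (b n) R hξ0 hξ1 hc1' hz0 hXpos hzb hn2 hn1 hRa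
    -- contradiction: z < R * ((c-1)/(c-ξ)) ≤ z
    have : R * ((c - 1) / (c - ξ)) ≤ z := by
      rw [mul_div_assoc', div_le_iff₀ hcξ]
      rw [mul_div_assoc', le_div_iff₀ (by linarith : (0:ℝ) < c - 1)] at hkey
      nlinarith
    linarith
  -- pass to the limit ξ → 1⁻
  haveI : (nhdsWithin (1:ℝ) (Set.Ioo (0:ℝ) 1)).NeBot := right_nhdsWithin_Ioo_neBot one_pos
  have htends : Filter.Tendsto (fun ξ : ℝ => ((R * ((c - 1) / (c - ξ)) : ℝ) : EReal))
      (nhdsWithin (1:ℝ) (Set.Ioo (0:ℝ) 1)) (nhds ((R : ℝ) : EReal)) := by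
    have hcont : ContinuousAt (fun ξ : ℝ => R * ((c - 1) / (c - ξ))) 1 := by
      apply ContinuousAt.mul continuousAt_const
      exact ContinuousAt.div continuousAt_const (by fun_prop)
        (by simp; intro h; linarith)
    have hval : R * ((c - 1) / (c - 1)) = R := by
      rw [div_self (by intro h; rw [sub_eq_zero] at h; exact absurd h.symm hc1'.ne), mul_one]
    have := (continuous_coe_real_ereal.continuousAt.comp hcont).tendsto
    simp only [Function.comp] at this
    rw [hval] at this
    exact this.mono_left nhdsWithin_le_nhds
  have hle : ∀ᶠ ξ in nhdsWithin (1:ℝ) (Set.Ioo (0:ℝ) 1),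
      ((R * ((c - 1) / (c - ξ)) : ℝ) : EReal) ≤ polyaLimsup Λ ξ :=
    eventually_nhdsWithin_of_forall hmain
  exact le_of_tendsto_of_tendsto htends hp hle
end

section
/- Let ξ ∈ (0,1) and η ∈ (ξ,1) be fixed, and assume x ≥ (1 − η²ξ)/(ξ(1−η)²). Let d be the smallest index with a_d ≤ ξx (so {(a_i,b_i] : i = 0,…,d} is the η-covering of (ξx, x]). Then d ≤ ⌈(log ξ)/(log η)⌉. -/
/-!
Since `⌈η y⌉ < η y + 1`, the quantity `(1 - η) b_i - 1` (the distance of `b_i` from the fixed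
point `1 / (1 - η)` of `y ↦ η y + 1`, rescaled) shrinks by a factor `η` at every step. Hence
`a_n` is at most about `η^n x + η / (1 - η)`, and once `η^n ≤ ξ` the lower bound on `x` makes
this at most `ξ x`. Taking `n = ⌈log ξ / log η⌉` gives `d ≤ n` by minimality of `d`.
-/

/-- `seqB η x i = f^i(⌈x⌉)` where `f(y) = ⌈η y⌉`. -/
noncomputable def seqB (η x : ℝ) (i : ℕ) : ℝ :=
  (fun y : ℝ => ((⌈η * y⌉ : ℤ) : ℝ))^[i] ((⌈x⌉ : ℤ) : ℝ)

/-- `seqA η x i = η * seqB η x i`. -/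
noncomputable def seqA (η x : ℝ) (i : ℕ) : ℝ := η * seqB η x i

section

variable {η x : ℝ}

lemma seqB_zero : seqB η x 0 = ⌈x⌉ := rfl

lemma seqB_succ (i : ℕ) : seqB η x (i + 1) = ⌈η * seqB η x i⌉ :=
  Function.iterate_succ_apply' _ _ _

lemma sub_one_seqB_lt (hη0 : 0 ≤ η) (hη1 : η < 1) (i : ℕ) :
    (1 - η) * seqB η x i - 1 < η ^ i * ((1 - η) * x - η) := by
  have h1η : 0 < 1 - η := sub_pos.mpr hη1
  induction i with
  | zero =>
    rw [seqB_zero, pow_zero, one_mul]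
    nlinarith [Int.ceil_lt_add_one x]
  | succ i ih =>
    have hstep : (1 - η) * seqB η x (i + 1) - 1 < η * ((1 - η) * seqB η x i - 1) := by
      rw [seqB_succ]
      nlinarith [Int.ceil_lt_add_one (η * seqB η x i)]
    calc (1 - η) * seqB η x (i + 1) - 1 < η * ((1 - η) * seqB η x i - 1) := hstep
      _ ≤ η * (η ^ i * ((1 - η) * x - η)) := mul_le_mul_of_nonneg_left ih.le hη0
      _ = η ^ (i + 1) * ((1 - η) * x - η) := by ring

lemma seqA_lt_of_pow_le {ξ : ℝ} {n : ℕ} (hξ1 : ξ ≤ 1) (hη0 : 0 < η) (hη1 : η < 1)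
    (hn : η ^ n ≤ ξ) (hx : η * (1 - η * ξ) ≤ ξ * (1 - η) ^ 2 * x) :
    seqA η x n < ξ * x := by
  have h1η : 0 < 1 - η := sub_pos.mpr hη1
  have hξ0 : 0 < ξ := (pow_pos hη0 n).trans_le hn
  -- `η (1 - η ξ) ≥ η ξ (1 - η)` because `ξ ≤ 1`; cancelling `ξ (1 - η)` leaves `(1 - η) x ≥ η`.
  have hgap : 0 ≤ (1 - η) * x - η := by
    have : ξ * (1 - η) * η ≤ ξ * (1 - η) * ((1 - η) * x) := by nlinarith
    linarith [le_of_mul_le_mul_left this (by positivity)]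
  have key : (1 - η) * seqA η x n < (1 - η) * (ξ * x) := calc
    (1 - η) * seqA η x n = η * ((1 - η) * seqB η x n - 1) + η := by rw [seqA]; ring
    _ < η * (η ^ n * ((1 - η) * x - η)) + η := by gcongr; exact sub_one_seqB_lt hη0.le hη1 n
    _ ≤ η * (ξ * ((1 - η) * x - η)) + η := by gcongr
    _ ≤ (1 - η) * (ξ * x) := by linear_combination hx
  exact lt_of_mul_lt_mul_left key h1η.le

end

lemma pow_natCeil_log_div_log_le {ξ η : ℝ} (hξ0 : 0 < ξ) (hη0 : 0 < η) (hη1 : η < 1) :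
    η ^ ⌈Real.log ξ / Real.log η⌉₊ ≤ ξ := by
  rw [Real.pow_le_iff_le_log hη0 hξ0, ← div_le_iff_of_neg (Real.log_neg hη0 hη1)]
  exact Nat.le_ceil _

theorem stmt_15_general (ξ η x : ℝ) (hξ : ξ ∈ Set.Ioo (0 : ℝ) 1) (hη : η ∈ Set.Ioo ξ 1)
    (hx : (1 - η ^ 2 * ξ) / (ξ * (1 - η) ^ 2) ≤ x)
    (d : ℕ) (hd2 : ∀ i : ℕ, i < d → ξ * x < seqA η x i) :
    (d : ℤ) ≤ ⌈Real.log ξ / Real.log η⌉ := by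
  obtain ⟨hξ0, hξ1⟩ := hξ
  obtain ⟨hηξ, hη1⟩ := hη
  have hη0 : 0 < η := hξ0.trans hηξ
  have hx' : η * (1 - η * ξ) ≤ ξ * (1 - η) ^ 2 * x := by
    have h1η : 0 < 1 - η := sub_pos.mpr hη1
    rw [div_le_iff₀ (by positivity)] at hx
    nlinarith
  have hd : d ≤ ⌈Real.log ξ / Real.log η⌉₊ := by
    by_contra! h
    exact (hd2 _ h).not_gt <| seqA_lt_of_pow_le hξ1.le hη0 hη1
      (pow_natCeil_log_div_log_le hξ0 hη0 hη1) hx'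
  have hratio : 0 ≤ Real.log ξ / Real.log η :=
    (div_pos_of_neg_of_neg (Real.log_neg hξ0 hξ1) (Real.log_neg hη0 hη1)).le
  rw [← Int.natCast_ceil_eq_ceil hratio]
  exact_mod_cast hd

theorem stmt_15 (ξ η x : ℝ) (hξ : ξ ∈ Set.Ioo (0 : ℝ) 1) (hη : η ∈ Set.Ioo ξ 1)
    (hx : (1 - η ^ 2 * ξ) / (ξ * (1 - η) ^ 2) ≤ x)
    (d : ℕ) (hd1 : seqA η x d ≤ ξ * x) (hd2 : ∀ i : ℕ, i < d → ξ * x < seqA η x i) :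
    (d : ℤ) ≤ ⌈Real.log ξ / Real.log η⌉ :=
  stmt_15_general ξ η x hξ hη hx d hd2
end
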